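/- arXiv:2108.09270 — 10 statements merged into one kernel-verified Lean document; each statement's English description precedes it below -/
import Mathlib

section
/- For all x and n in M, there exists a unique y in M such that Sum x n y holds. (In particular, a binary addition operation on M is well defined by recursion on the second argument, even though s is not assumed injective.) -/
/-!
By induction every element of `M` is an iterate `s^[k] z`, and `SumRel z s x n y` holds exactly
when `n = s^[k] z` and `y = s^[k] x` for some `k`. This gives existence at once. For uniqueness,
`s` need not be injective, so `s^[a] z = s^[b] z` does not force `a = b`; but iterates of `s`
commute, so it still forces `s^[a] (s^[j] z) = s^[b] (s^[j] z)`, that is, `s^[a] x = s^[b] x`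
for every `x`.
-/

inductive SumRel {M : Type} (z : M) (s : M → M) : M → M → M → Prop
  | base (x : M) : SumRel z s x z x
  | step {x n y : M} : SumRel z s x n y → SumRel z s x (s n) (s y)

namespace SumRel

variable {M : Type} {z : M} {s : M → M}

theorem iterate (x : M) (k : ℕ) : SumRel z s x (s^[k] z) (s^[k] x) := by
  induction k with
  | zero => exact base x
  | succ k ih =>
    rw [Function.iterate_succ_apply', Function.iterate_succ_apply']
    exact step ih

theorem exists_eq_iterate {x n y : M} (h : SumRel z s x n y) :
    ∃ k : ℕ, n = s^[k] z ∧ y = s^[k] x := by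
  induction h with
  | base => exact ⟨0, rfl, rfl⟩
  | step _ ih =>
    obtain ⟨k, rfl, rfl⟩ := ih
    exact ⟨k + 1, (Function.iterate_succ_apply' s k z).symm,
      (Function.iterate_succ_apply' s k _).symm⟩

end SumRel

theorem Function.iterate_apply_iterate_eq_of_iterate_eq {α : Type*} {f : α → α} {z : α}
    {a b : ℕ} (hab : f^[a] z = f^[b] z) (j : ℕ) : f^[a] (f^[j] z) = f^[b] (f^[j] z) := by
  rw [← Function.Commute.iterate_iterate_self f j a, hab,
    Function.Commute.iterate_iterate_self f j b]

theorem exists_eq_iterate_of_induction {M : Type} {z : M} {s : M → M}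
    (ind : ∀ P : M → Prop, P z → (∀ x, P x → P (s x)) → ∀ x, P x) (x : M) :
    ∃ k : ℕ, x = s^[k] z :=
  ind (fun x => ∃ k : ℕ, x = s^[k] z) ⟨0, rfl⟩
    (fun _ ⟨k, hk⟩ => ⟨k + 1, by rw [hk, Function.iterate_succ_apply']⟩) x

theorem stmt0_general (M : Type) (z : M) (s : M → M)
    (ind : ∀ P : M → Prop, P z → (∀ x, P x → P (s x)) → ∀ x, P x) :
    ∀ x n : M, ∃! y : M, SumRel z s x n y := by
  intro x n
  obtain ⟨k, rfl⟩ := exists_eq_iterate_of_induction ind n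
  refine ⟨s^[k] x, SumRel.iterate x k, fun y hy => ?_⟩
  obtain ⟨k', hn, rfl⟩ := hy.exists_eq_iterate
  obtain ⟨j, rfl⟩ := exists_eq_iterate_of_induction ind x
  exact Function.iterate_apply_iterate_eq_of_iterate_eq hn.symm j

theorem stmt0 (M : Type) (z : M) (s : M → M)
    (ind : ∀ P : M → Prop, P z → (∀ x, P x → P (s x)) → ∀ x, P x)
    (hz : ∀ x : M, s x ≠ z) :
    ∀ x n : M, ∃! y : M, SumRel z s x n y :=
  stmt0_general M z s ind
end

section
/- Weak trichotomy holds on M: for all x, y in M, at least one of x < y, x = y, or y < x holds. -/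
/-! Induction on `y`. The base case needs only `z ⊕ x = x`, so every `x ≠ z` lies above `z`;
in the step, `y < x` with `x = y ⊕ s (s m)` is turned into `s y < x` by `s y ⊕ n = s (y ⊕ n)`. -/

namespace PeanoSystem

variable {M : Type} {z : M} {s : M → M} {add : M → M → M}

theorem eq_zero_or_exists_succ
    (ind : ∀ P : M → Prop, P z → (∀ x, P x → P (s x)) → ∀ x, P x) (x : M) :
    x = z ∨ ∃ m, s m = x :=
  ind (fun x => x = z ∨ ∃ m, s m = x) (Or.inl rfl) (fun a _ => Or.inr ⟨a, rfl⟩) x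

theorem zero_add
    (ind : ∀ P : M → Prop, P z → (∀ x, P x → P (s x)) → ∀ x, P x)
    (haddz : ∀ x : M, add x z = x) (hadds : ∀ x n : M, add x (s n) = s (add x n)) (x : M) :
    add z x = x :=
  ind (fun x => add z x = x) (haddz z) (fun n h => by rw [hadds, h]) x

theorem succ_add
    (ind : ∀ P : M → Prop, P z → (∀ x, P x → P (s x)) → ∀ x, P x)
    (haddz : ∀ x : M, add x z = x) (hadds : ∀ x n : M, add x (s n) = s (add x n)) (a b : M) :
    add (s a) b = s (add a b) :=
  ind (fun b => add (s a) b = s (add a b)) (by rw [haddz, haddz])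
    (fun n h => by rw [hadds, h, hadds]) b

theorem eq_zero_or_zero_lt
    (ind : ∀ P : M → Prop, P z → (∀ x, P x → P (s x)) → ∀ x, P x)
    (haddz : ∀ x : M, add x z = x) (hadds : ∀ x n : M, add x (s n) = s (add x n)) (x : M) :
    x = z ∨ ∃ n, add z (s n) = x := by
  rcases eq_zero_or_exists_succ ind x with hx | ⟨m, rfl⟩
  · exact Or.inl hx
  · exact Or.inr ⟨m, by rw [zero_add ind haddz hadds]⟩

theorem trichotomy_succ
    (ind : ∀ P : M → Prop, P z → (∀ x, P x → P (s x)) → ∀ x, P x)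
    (haddz : ∀ x : M, add x z = x) (hadds : ∀ x n : M, add x (s n) = s (add x n)) {x y : M}
    (h : (∃ n, add x (s n) = y) ∨ x = y ∨ ∃ n, add y (s n) = x) :
    (∃ n, add x (s n) = s y) ∨ x = s y ∨ ∃ n, add (s y) (s n) = x := by
  rcases h with ⟨n, rfl⟩ | rfl | ⟨n, rfl⟩
  · exact Or.inl ⟨s n, hadds x (s n)⟩
  · exact Or.inl ⟨z, by rw [hadds, haddz]⟩
  · rcases eq_zero_or_exists_succ ind n with rfl | ⟨m, rfl⟩
    · exact Or.inr (Or.inl (by rw [hadds, haddz]))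
    · exact Or.inr (Or.inr ⟨m, by rw [succ_add ind haddz hadds, ← hadds]⟩)

end PeanoSystem

open PeanoSystem in
theorem stmt6_general (M : Type) (z : M) (s : M → M)
    (ind : ∀ P : M → Prop, P z → (∀ x, P x → P (s x)) → ∀ x, P x)
    (add : M → M → M)
    (haddz : ∀ x : M, add x z = x)
    (hadds : ∀ x n : M, add x (s n) = s (add x n)) :
    ∀ x y : M, (∃ n : M, add x (s n) = y) ∨ x = y ∨ (∃ n : M, add y (s n) = x) := by
  intro x y
  refine ind (fun y => (∃ n, add x (s n) = y) ∨ x = y ∨ ∃ n, add y (s n) = x) ?_ (fun y ih => trichotomy_succ ind haddz hadds ih) y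
  rcases eq_zero_or_zero_lt ind haddz hadds x with rfl | hlt
  · exact Or.inr (Or.inl rfl)
  · exact Or.inr (Or.inr hlt)

theorem stmt6 (M : Type) (z : M) (s : M → M)
    (ind : ∀ P : M → Prop, P z → (∀ x, P x → P (s x)) → ∀ x, P x)
    (hz : ∀ x : M, s x ≠ z)
    (add : M → M → M)
    (haddz : ∀ x : M, add x z = x)
    (hadds : ∀ x n : M, add x (s n) = s (add x n)) :
    ∀ x y : M, (∃ n : M, add x (s n) = y) ∨ x = y ∨ (∃ n : M, add y (s n) = x) :=
  stmt6_general M z s ind add haddz hadds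
end

section
/- For all x, y in M, if x < y then s x < y or s x = y. -/
theorem succ_add_of_induction {M : Type*} {z : M} {s : M → M} {add : M → M → M}
    (ind : ∀ P : M → Prop, P z → (∀ x, P x → P (s x)) → ∀ x, P x)
    (haddz : ∀ x : M, add x z = x) (hadds : ∀ x n : M, add x (s n) = s (add x n))
    (x n : M) : add (s x) n = s (add x n) := by
  refine ind (fun n => add (s x) n = s (add x n)) ?_ ?_ n
  · simp only [haddz]
  · intro n ih
    simp only [hadds, ih]

theorem eq_zero_or_exists_eq_succ_of_induction {M : Type*} {z : M} {s : M → M}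
    (ind : ∀ P : M → Prop, P z → (∀ x, P x → P (s x)) → ∀ x, P x) (n : M) :
    n = z ∨ ∃ m, n = s m :=
  ind (fun n => n = z ∨ ∃ m, n = s m) (Or.inl rfl) (fun m _ => Or.inr ⟨m, rfl⟩) n

theorem stmt7_general (M : Type) (z : M) (s : M → M)
    (ind : ∀ P : M → Prop, P z → (∀ x, P x → P (s x)) → ∀ x, P x)
    (add : M → M → M)
    (haddz : ∀ x : M, add x z = x)
    (hadds : ∀ x n : M, add x (s n) = s (add x n)) :
    ∀ x y : M, (∃ n : M, add x (s n) = y) →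
      (∃ n : M, add (s x) (s n) = y) ∨ s x = y := by
  rintro x y ⟨n, rfl⟩
  rcases eq_zero_or_exists_eq_succ_of_induction ind n with rfl | ⟨m, rfl⟩
  · right
    rw [hadds, haddz]
  · left
    exact ⟨m, by rw [succ_add_of_induction ind haddz hadds, ← hadds]⟩

theorem stmt7 (M : Type) (z : M) (s : M → M)
    (ind : ∀ P : M → Prop, P z → (∀ x, P x → P (s x)) → ∀ x, P x)
    (hz : ∀ x : M, s x ≠ z)
    (add : M → M → M)
    (haddz : ∀ x : M, add x z = x)
    (hadds : ∀ x n : M, add x (s n) = s (add x n)) :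
    ∀ x y : M, (∃ n : M, add x (s n) = y) →
      (∃ n : M, add (s x) (s n) = y) ∨ s x = y :=
  stmt7_general M z s ind add haddz hadds
end

section
/- Annihilation Theorem: if u ⊕ m = u for some u, m in M, and f : X → X is injective, then φ m is the identity on X, i.e., φ m x = x for all x in X. -/
/-!
Since `φ` sends `s` to post-composition with `f`, each `φ m` commutes with `f`, is injective,
and `φ (x ⊕ n) = φ x ∘ φ n`. Hence `u ⊕ m = u` gives `φ u ∘ φ m = φ u`, and cancelling the
injective `φ u` on the left leaves `φ m = id`.
-/

section IterationAction

variable {M X : Type*} {z : M} {s : M → M} {f : X → X} {φ : M → X → X}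

theorem comp_comm_of_iterateAction
    (ind : ∀ P : M → Prop, P z → (∀ x, P x → P (s x)) → ∀ x, P x)
    (hφz : φ z = id) (hφs : ∀ m, φ (s m) = f ∘ φ m) (m : M) : f ∘ φ m = φ m ∘ f := by
  refine ind (fun m => f ∘ φ m = φ m ∘ f) (by rw [hφz]; rfl) (fun m ih => ?_) m
  rw [hφs, Function.comp_assoc, ← ih]

theorem injective_of_iterateAction
    (ind : ∀ P : M → Prop, P z → (∀ x, P x → P (s x)) → ∀ x, P x)
    (hφz : φ z = id) (hφs : ∀ m, φ (s m) = f ∘ φ m)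
    (hf : Function.Injective f) (m : M) :
    Function.Injective (φ m) := by
  refine ind (fun m => Function.Injective (φ m)) (hφz ▸ Function.injective_id)
    (fun m ih => ?_) m
  rw [hφs]
  exact hf.comp ih

theorem map_add_of_iterateAction
    (ind : ∀ P : M → Prop, P z → (∀ x, P x → P (s x)) → ∀ x, P x)
    (hφz : φ z = id) (hφs : ∀ m, φ (s m) = f ∘ φ m)
    {add : M → M → M} (haddz : ∀ x, add x z = x)
    (hadds : ∀ x n, add x (s n) = s (add x n)) (x n : M) : φ (add x n) = φ x ∘ φ n := by
  refine ind (fun n => ∀ x, φ (add x n) = φ x ∘ φ n)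
    (fun x => by rw [haddz, hφz, Function.comp_id]) (fun n ih x => ?_) n x
  rw [hadds, hφs, hφs, ih, ← Function.comp_assoc,
    comp_comm_of_iterateAction ind hφz hφs, Function.comp_assoc]

end IterationAction

theorem stmt11_general (M : Type) (z : M) (s : M → M)
    (ind : ∀ P : M → Prop, P z → (∀ x, P x → P (s x)) → ∀ x, P x)
    (add : M → M → M)
    (haddz : ∀ x : M, add x z = x)
    (hadds : ∀ x n : M, add x (s n) = s (add x n))
    (X : Type) (f : X → X) (hf : Function.Injective f)
    (φ : M → X → X)
    (hφz : φ z = id)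
    (hφs : ∀ m : M, φ (s m) = f ∘ φ m)
    (u m : M) (hum : add u m = u) :
    ∀ x : X, φ m x = x := by
  have hcancel : φ u ∘ φ m = φ u ∘ id := by
    rw [← map_add_of_iterateAction ind hφz hφs haddz hadds, hum, Function.comp_id]
  exact congrFun ((injective_of_iterateAction ind hφz hφs hf u).comp_left hcancel)

theorem stmt11 (M : Type) (z : M) (s : M → M)
    (ind : ∀ P : M → Prop, P z → (∀ x, P x → P (s x)) → ∀ x, P x)
    (hz : ∀ x : M, s x ≠ z)
    (add : M → M → M)
    (haddz : ∀ x : M, add x z = x)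
    (hadds : ∀ x n : M, add x (s n) = s (add x n))
    (X : Type) (f : X → X) (hf : Function.Injective f)
    (φ : M → X → X)
    (hφz : φ z = id)
    (hφs : ∀ m : M, φ (s m) = f ∘ φ m)
    (u m : M) (hum : add u m = u) :
    ∀ x : X, φ m x = x :=
  stmt11_general M z s ind add haddz hadds X f hf φ hφz hφs u m hum
end

section
/- If the successor map s is not injective, then M is a finite type. Equivalently, if M is infinite then s is injective. -/
/-! The orbit map `k ↦ s^[k] z` is onto by induction. If it were injective it would conjugate
`Nat.succ` to `s`, making `s` injective; so two iterates coincide, the orbit is eventually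
periodic, and `M`, being the orbit, is finite. -/

namespace Function

variable {α : Type*} {f : α → α} {x : α}

theorem surjective_iterate_of_induction
    (ind : ∀ P : α → Prop, P x → (∀ y, P y → P (f y)) → ∀ y, P y) :
    Surjective fun k => f^[k] x :=
  ind _ ⟨0, rfl⟩ fun _ ⟨k, hk⟩ => ⟨k + 1, (iterate_succ_apply' f k x).trans (congrArg f hk)⟩

theorem injective_of_bijective_iterate (h : Bijective fun k => f^[k] x) : Injective f := by
  intro a b hab
  obtain ⟨p, rfl⟩ := h.surjective a
  obtain ⟨q, rfl⟩ := h.surjective b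
  have : p + 1 = q + 1 := h.injective (by simpa only [iterate_succ_apply'] using hab)
  rw [Nat.succ_injective this]

theorem range_iterate_subset_image_Iio {m n : ℕ} (hmn : m < n) (h : f^[m] x = f^[n] x) :
    Set.range (fun k => f^[k] x) ⊆ (fun k => f^[k] x) '' Set.Iio n := by
  rintro _ ⟨k, rfl⟩
  rcases lt_or_ge k n with hk | hk
  · exact ⟨k, hk, rfl⟩
  have hper : IsPeriodicPt f (n - m) (f^[m] x) := by
    rw [IsPeriodicPt, IsFixedPt, ← iterate_add_apply, Nat.sub_add_cancel hmn.le, h]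
  refine ⟨(k - m) % (n - m) + m, ?_, ?_⟩
  · have := Nat.mod_lt (k - m) (Nat.sub_pos_of_lt hmn)
    simp only [Set.mem_Iio]
    omega
  · calc f^[(k - m) % (n - m) + m] x = f^[(k - m) % (n - m)] (f^[m] x) := iterate_add_apply ..
      _ = f^[k - m] (f^[m] x) := hper.iterate_mod_apply _
      _ = f^[k] x := by rw [← iterate_add_apply, Nat.sub_add_cancel (hmn.trans_le hk).le]

theorem finite_range_iterate_of_not_injective (h : ¬ Injective fun k => f^[k] x) :
    (Set.range fun k => f^[k] x).Finite := by
  obtain ⟨m, n, heq, hne⟩ := not_injective_iff.mp h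
  rcases hne.lt_or_gt with hmn | hnm
  · exact ((Set.finite_Iio n).image _).subset (range_iterate_subset_image_Iio hmn heq)
  · exact ((Set.finite_Iio m).image _).subset (range_iterate_subset_image_Iio hnm heq.symm)

end Function

open Function in
theorem stmt12_general (M : Type) (z : M) (s : M → M)
    (ind : ∀ P : M → Prop, P z → (∀ x, P x → P (s x)) → ∀ x, P x)
    (hnotinj : ¬ Function.Injective s) :
    Finite M := by
  have hsurj := surjective_iterate_of_induction ind
  have horbit : ¬ Injective fun k => s^[k] z :=
    fun hinj => hnotinj (injective_of_bijective_iterate ⟨hinj, hsurj⟩)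
  rw [← Set.finite_univ_iff, ← hsurj.range_eq]
  exact finite_range_iterate_of_not_injective horbit

theorem stmt12 (M : Type) (z : M) (s : M → M)
    (ind : ∀ P : M → Prop, P z → (∀ x, P x → P (s x)) → ∀ x, P x)
    (hz : ∀ x : M, s x ≠ z)
    (hnotinj : ¬ Function.Injective s) :
    Finite M :=
  stmt12_general M z s ind hnotinj
end

section
/- There are no double successors inside the stem: if u ∈ STEM and s u ∈ STEM, then for every v in M, s v = s u implies v = u. -/
def STEM {M : Type} (z : M) (s : M → M) : Set M :=
  { x | ∀ X : Set M, z ∈ X →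
      (∀ u, u ∈ X → (∀ v, s v = s u → v = u) → s u ∈ X) → x ∈ X }

theorem eq_or_eq_succ_of_mem_STEM {M : Type} {z : M} {s : M → M} {x : M}
    (hx : x ∈ STEM z s) : x = z ∨ ∃ w, x = s w ∧ ∀ v, s v = s w → v = w :=
  hx {x | x = z ∨ ∃ w, x = s w ∧ ∀ v, s v = s w → v = w}
    (Or.inl rfl) (fun w _ hw => Or.inr ⟨w, rfl, hw⟩)

theorem stmt13_general (M : Type) (z : M) (s : M → M)
    (hz : ∀ x : M, s x ≠ z) :
    ∀ u : M, u ∈ STEM z s → s u ∈ STEM z s → ∀ v : M, s v = s u → v = u := by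
  intro u _ hsu v hvu
  obtain h | ⟨w, hsuw, hw⟩ := eq_or_eq_succ_of_mem_STEM hsu
  · exact absurd h (hz u)
  · rw [hw u hsuw, hw v (hvu.trans hsuw)]

theorem stmt13 (M : Type) (z : M) (s : M → M)
    (ind : ∀ P : M → Prop, P z → (∀ x, P x → P (s x)) → ∀ x, P x)
    (hz : ∀ x : M, s x ≠ z) :
    ∀ u : M, u ∈ STEM z s → s u ∈ STEM z s → ∀ v : M, s v = s u → v = u :=
  stmt13_general M z s hz
end

section
/- The stem is closed under predecessors: for all y in M, if s y ∈ STEM then y ∈ STEM. -/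
namespace STEM

variable {M : Type} {z : M} {s : M → M}

theorem zero_mem : z ∈ STEM z s :=
  fun _ hz _ => hz

theorem succ_mem {u : M} (hu : u ∈ STEM z s) (huniq : ∀ v, s v = s u → v = u) :
    s u ∈ STEM z s :=
  fun X hz hclosed => hclosed u (hu X hz hclosed) huniq

theorem induction_on {P : M → Prop} (h0 : P z)
    (hsucc : ∀ u ∈ STEM z s, (∀ v, s v = s u → v = u) → P u → P (s u))
    {x : M} (hx : x ∈ STEM z s) : P x :=
  (hx {x | x ∈ STEM z s ∧ P x} ⟨zero_mem, h0⟩ fun u ⟨hu, hPu⟩ huniq =>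
    ⟨succ_mem hu huniq, hsucc u hu huniq hPu⟩).2

theorem eq_zero_or_eq_succ {x : M} (hx : x ∈ STEM z s) :
    x = z ∨ ∃ u ∈ STEM z s, (∀ v, s v = s u → v = u) ∧ x = s u :=
  induction_on (P := fun x => x = z ∨ ∃ u ∈ STEM z s, (∀ v, s v = s u → v = u) ∧ x = s u)
    (Or.inl rfl) (fun u hu huniq _ => Or.inr ⟨u, hu, huniq, rfl⟩) hx

end STEM

theorem stmt14_general (M : Type) (z : M) (s : M → M)
    (hz : ∀ x : M, s x ≠ z) :
    ∀ y : M, s y ∈ STEM z s → y ∈ STEM z s := by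
  intro y hy
  rcases STEM.eq_zero_or_eq_succ hy with hyz | ⟨u, hu, huniq, hyu⟩
  · exact absurd hyz (hz y)
  · rwa [huniq y hyu]

theorem stmt14 (M : Type) (z : M) (s : M → M)
    (ind : ∀ P : M → Prop, P z → (∀ x, P x → P (s x)) → ∀ x, P x)
    (hz : ∀ x : M, s x ≠ z) :
    ∀ y : M, s y ∈ STEM z s → y ∈ STEM z s :=
  stmt14_general M z s hz
end

section
/- If s k = s n with k ∈ STEM and k ≠ n, then k is the maximum of the stem: STEM = { x ∈ M : x < k ∨ x = k }. -/
section Stem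

variable {M : Type} {z : M} {s : M → M} {add : M → M → M}

def PeanoLt (add : M → M → M) (s : M → M) (x y : M) : Prop :=
  ∃ j, add x (s j) = y

theorem zero_mem_STEM : z ∈ STEM z s :=
  fun _ hz _ => hz

theorem succ_mem_STEM {u : M} (hu : u ∈ STEM z s) (hinj : ∀ v, s v = s u → v = u) :
    s u ∈ STEM z s :=
  fun X hz hsucc => hsucc u (hu X hz hsucc) hinj

theorem STEM_subset {X : Set M} (hz : z ∈ X)
    (hsucc : ∀ u, u ∈ X → (∀ v, s v = s u → v = u) → s u ∈ X) : STEM z s ⊆ X :=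
  fun _ hx => hx X hz hsucc

theorem not_peanoLt_zero (hz : ∀ x : M, s x ≠ z) (hadds : ∀ x n : M, add x (s n) = s (add x n))
    (y : M) : ¬ PeanoLt add s y z := by
  rintro ⟨j, hj⟩
  exact hz _ (hadds y j ▸ hj)

section PeanoAxioms

variable (ind : ∀ P : M → Prop, P z → (∀ x, P x → P (s x)) → ∀ x, P x)
  (haddz : ∀ x : M, add x z = x) (hadds : ∀ x n : M, add x (s n) = s (add x n))
include ind

theorem eq_zero_or_exists_succ_eq (x : M) : x = z ∨ ∃ j, s j = x :=
  ind (fun x => x = z ∨ ∃ j, s j = x) (Or.inl rfl) (fun x _ => Or.inr ⟨x, rfl⟩) x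

include haddz hadds

theorem succ_add (u t : M) : add (s u) t = s (add u t) :=
  ind (fun t => ∀ u, add (s u) t = s (add u t))
    (fun u => by rw [haddz, haddz])
    (fun t ih u => by rw [hadds, hadds, ih]) t u

theorem zero_peanoLt_or_eq (x : M) : PeanoLt add s z x ∨ z = x := by
  refine ind (fun x => PeanoLt add s z x ∨ z = x) (Or.inr rfl) ?_ x
  rintro x (⟨j, hj⟩ | rfl)
  · exact Or.inl ⟨s j, by rw [hadds, hj]⟩
  · exact Or.inl ⟨z, by rw [hadds, haddz]⟩

theorem succ_peanoLt_or_eq_of_peanoLt {u k : M} (h : PeanoLt add s u k) :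
    PeanoLt add s (s u) k ∨ s u = k := by
  obtain ⟨j, rfl⟩ := h
  rcases eq_zero_or_exists_succ_eq ind j with rfl | ⟨j, rfl⟩
  · exact Or.inr (by rw [hadds, haddz])
  · exact Or.inl ⟨j, by simp only [succ_add ind haddz hadds, hadds]⟩

theorem peanoLt_or_eq_of_peanoLt_succ {y u : M} (hinj : ∀ v, s v = s u → v = u)
    (h : PeanoLt add s y (s u)) : PeanoLt add s y u ∨ y = u := by
  obtain ⟨j, hj⟩ := h
  have hju : add y j = u := hinj _ (hadds y j ▸ hj)
  rcases eq_zero_or_exists_succ_eq ind j with rfl | ⟨j, rfl⟩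
  · exact Or.inr (haddz y ▸ hju)
  · exact Or.inl ⟨j, hju⟩

theorem STEM_subset_peanoLe {k n : M} (hkn : s k = s n) (hne : k ≠ n) :
    STEM z s ⊆ {x | PeanoLt add s x k ∨ x = k} := by
  refine STEM_subset (zero_peanoLt_or_eq ind haddz hadds k) ?_
  rintro u (hu | rfl) hinj
  · exact succ_peanoLt_or_eq_of_peanoLt ind haddz hadds hu
  · exact absurd (hinj n hkn.symm).symm hne

theorem peanoLe_subset_STEM (hz : ∀ x : M, s x ≠ z) {k : M} (hk : k ∈ STEM z s) :
    {x | PeanoLt add s x k ∨ x = k} ⊆ STEM z s := by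
  let Hereditary : Set M := {u | ∀ y, PeanoLt add s y u ∨ y = u → y ∈ STEM z s}
  have hzero : z ∈ Hereditary := by
    rintro y (hy | rfl)
    · exact absurd hy (not_peanoLt_zero hz hadds y)
    · exact zero_mem_STEM
  have hsucc : ∀ u ∈ Hereditary, (∀ v, s v = s u → v = u) → s u ∈ Hereditary := by
    intro u hu hinj y hy
    rcases hy with hy | rfl
    · exact hu y (peanoLt_or_eq_of_peanoLt_succ ind haddz hadds hinj hy)
    · exact succ_mem_STEM (hu u (Or.inr rfl)) hinj
  exact STEM_subset hzero hsucc hk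

end PeanoAxioms

end Stem

theorem stmt15 (M : Type) (z : M) (s : M → M)
    (ind : ∀ P : M → Prop, P z → (∀ x, P x → P (s x)) → ∀ x, P x)
    (hz : ∀ x : M, s x ≠ z)
    (add : M → M → M)
    (haddz : ∀ x : M, add x z = x)
    (hadds : ∀ x n : M, add x (s n) = s (add x n))
    (k n : M) (hkn : s k = s n) (hk : k ∈ STEM z s) (hne : k ≠ n) :
    STEM z s = { x : M | (∃ j : M, add x (s j) = k) ∨ x = k } :=
  (STEM_subset_peanoLe ind haddz hadds hkn hne).antisymm
    (peanoLe_subset_STEM ind haddz hadds hz hk)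
end

section
/- The stem and loop cover everything: M = L(n) ∪ STEM, i.e., every element of M lies in STEM or in L(n). -/
def LOOP {M : Type} (s : M → M) (n : M) : Set M :=
  { x | ∀ X : Set M, n ∈ X → (∀ u, u ∈ X → s u ∈ X) → x ∈ X }

open Function

section
variable {M : Type} {s : M → M}

theorem mem_LOOP_iff {n x : M} : x ∈ LOOP s n ↔ ∃ t, s^[t] n = x := by
  constructor
  · intro hx
    exact hx {x | ∃ t, s^[t] n = x} ⟨0, rfl⟩
      fun u ⟨t, ht⟩ => ⟨t + 1, by rw [iterate_succ_apply', ht]⟩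
  · rintro ⟨t, rfl⟩ X hn hcl
    induction t with
    | zero => exact hn
    | succ t ih => rw [iterate_succ_apply']; exact hcl _ ih

theorem self_mem_LOOP (n : M) : n ∈ LOOP s n := fun _ hn _ => hn

theorem apply_mem_LOOP {n x : M} (hx : x ∈ LOOP s n) : s x ∈ LOOP s n :=
  fun X hn hcl => hcl _ (hx X hn hcl)

theorem mem_LOOP_or_mem_LOOP {w x y : M} (hx : x ∈ LOOP s w) (hy : y ∈ LOOP s w) :
    x ∈ LOOP s y ∨ y ∈ LOOP s x := by
  obtain ⟨a, rfl⟩ := mem_LOOP_iff.mp hx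
  obtain ⟨b, rfl⟩ := mem_LOOP_iff.mp hy
  rcases le_total a b with hab | hba
  · exact Or.inr (mem_LOOP_iff.mpr ⟨b - a, by rw [← iterate_add_apply, Nat.sub_add_cancel hab]⟩)
  · exact Or.inl (mem_LOOP_iff.mpr ⟨a - b, by rw [← iterate_add_apply, Nat.sub_add_cancel hba]⟩)

theorem mem_LOOP_of_isPeriodicPt {d : ℕ} {n y : M} (hy : IsPeriodicPt s d y) (hd : 0 < d)
    (hn : n ∈ LOOP s y) : y ∈ LOOP s n := by
  obtain ⟨j, rfl⟩ := mem_LOOP_iff.mp hn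
  refine mem_LOOP_iff.mpr ⟨d * j - j, ?_⟩
  rw [← iterate_add_apply, Nat.sub_add_cancel (Nat.le_mul_of_pos_left j hd)]
  exact (hy.mul_const j).eq

theorem isPeriodicPt_apply_of_apply_iterate_eq {t : ℕ} {x : M} (h : s (s^[t] x) = s x) :
    IsPeriodicPt s t (s x) := by
  rw [IsPeriodicPt, IsFixedPt, ← iterate_succ_apply, iterate_succ_apply']
  exact h

theorem exists_isPeriodicPt_apply_of_apply_eq {w v x : M} (hv : v ∈ LOOP s w)
    (hx : x ∈ LOOP s w) (h : s v = s x) (hne : v ≠ x) :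
    ∃ d, 0 < d ∧ IsPeriodicPt s d (s x) := by
  rcases mem_LOOP_or_mem_LOOP hv hx with hvx | hxv
  · obtain ⟨t, rfl⟩ := mem_LOOP_iff.mp hvx
    exact ⟨t, Nat.pos_of_ne_zero fun ht => hne (by simp [ht]),
      isPeriodicPt_apply_of_apply_iterate_eq h⟩
  · obtain ⟨t, rfl⟩ := mem_LOOP_iff.mp hxv
    refine ⟨t, Nat.pos_of_ne_zero fun ht => hne (by simp [ht]), ?_⟩
    rw [← h]
    exact isPeriodicPt_apply_of_apply_iterate_eq h.symm

theorem self_mem_STEM (z : M) : z ∈ STEM z s := fun _ hz _ => hz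

theorem apply_mem_STEM {z x : M} (hx : x ∈ STEM z s) (hinj : ∀ v, s v = s x → v = x) :
    s x ∈ STEM z s :=
  fun X hz hcl => hcl _ (hx X hz hcl) hinj

end

theorem stmt17_general (M : Type) (z : M) (s : M → M)
    (ind : ∀ P : M → Prop, P z → (∀ x, P x → P (s x)) → ∀ x, P x)
    (n : M) :
    ∀ x : M, x ∈ LOOP s n ∨ x ∈ STEM z s := by
  have hall : ∀ x, x ∈ LOOP s z := ind _ (self_mem_LOOP z) fun _ => apply_mem_LOOP
  refine ind _ (Or.inr (self_mem_STEM z)) ?_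
  rintro x (hx | hx)
  · exact Or.inl (apply_mem_LOOP hx)
  by_cases hinj : ∀ v, s v = s x → v = x
  · exact Or.inr (apply_mem_STEM hx hinj)
  push Not at hinj
  obtain ⟨v, hv, hvx⟩ := hinj
  obtain ⟨d, hd, hper⟩ := exists_isPeriodicPt_apply_of_apply_eq (hall v) (hall x) hv hvx
  exact Or.inl ((mem_LOOP_or_mem_LOOP (hall (s x)) (hall n)).elim id
    (mem_LOOP_of_isPeriodicPt hper hd))

theorem stmt17 (M : Type) (z : M) (s : M → M)
    (ind : ∀ P : M → Prop, P z → (∀ x, P x → P (s x)) → ∀ x, P x)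
    (hz : ∀ x : M, s x ≠ z)
    (k n : M) (hkn : s k = s n) (hk : k ∈ STEM z s) (hne : k ≠ n) :
    ∀ x : M, x ∈ LOOP s n ∨ x ∈ STEM z s :=
  stmt17_general M z s ind n
end

section
/- If M is a finite type, then there exist k and n in M with s k = s n, k ≠ n, and k ∈ STEM; moreover the double successor is unique: for any j, ℓ in M with j ≠ ℓ and s j = s ℓ, the pair {j, ℓ} equals {k, n}. -/
namespace Set

variable {α β : Type*} {f : α → β} {a b : α}

theorem injOn_compl_singleton_of_card_le_ncard_range_add_one [Finite α]
    (hcard : Nat.card α ≤ (range f).ncard + 1) (hab : a ≠ b) (hf : f a = f b) :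
    InjOn f {b}ᶜ := by
  have hrange : f '' {b}ᶜ = range f := by
    refine (image_subset_range f _).antisymm ?_
    rintro _ ⟨x, rfl⟩
    obtain rfl | hx := eq_or_ne x b
    · exact ⟨a, hab, hf⟩
    · exact ⟨x, hx, rfl⟩
  have hcompl : ({b}ᶜ : Set α).ncard = Nat.card α - 1 := by
    rw [ncard_compl, ncard_singleton]
  refine injOn_of_ncard_image_eq (le_antisymm ncard_image_le ?_)
  rw [hrange, hcompl]
  omega

theorem pair_eq_of_injOn_compl_singleton (hinj : InjOn f {b}ᶜ) (hab : a ≠ b) (hf : f a = f b)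
    {j ℓ : α} (hjℓ : j ≠ ℓ) (hfjℓ : f j = f ℓ) : ({j, ℓ} : Set α) = {a, b} := by
  have eq_a : ∀ x, x ≠ b → f x = f b → x = a := fun x hx hfx =>
    hinj hx hab (hfx.trans hf.symm)
  obtain rfl | hj := eq_or_ne j b
  · rw [eq_a ℓ hjℓ.symm hfjℓ.symm, pair_comm]
  obtain rfl | hℓ := eq_or_ne ℓ b
  · rw [eq_a j hj hfjℓ]
  exact absurd (hinj hj hℓ hfjℓ) hjℓ

end Set

section

variable {M : Type} {z : M} {s : M → M}

theorem range_eq_compl_singleton_of_induction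
    (ind : ∀ P : M → Prop, P z → (∀ x, P x → P (s x)) → ∀ x, P x) (hz : ∀ x, s x ≠ z) :
    Set.range s = {z}ᶜ := by
  ext x
  refine ⟨?_, fun hx => ?_⟩
  · rintro ⟨y, rfl⟩
    exact hz y
  · obtain rfl | hsucc := ind (fun x => x = z ∨ x ∈ Set.range s) (Or.inl rfl)
      (fun x _ => Or.inr ⟨x, rfl⟩) x
    exacts [absurd rfl hx, hsucc]

theorem forall_mem_STEM_of_induction
    (ind : ∀ P : M → Prop, P z → (∀ x, P x → P (s x)) → ∀ x, P x)
    (hfib : ∀ u ∈ STEM z s, ∀ v, s v = s u → v = u) (x : M) : x ∈ STEM z s :=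
  ind (· ∈ STEM z s) (fun _ hzX _ => hzX)
    (fun u hu X hzX hX => hX u (hu X hzX hX) (hfib u hu)) x

end

theorem stmt19 (M : Type) (z : M) (s : M → M)
    (ind : ∀ P : M → Prop, P z → (∀ x, P x → P (s x)) → ∀ x, P x)
    (hz : ∀ x : M, s x ≠ z)
    (hfin : Finite M) :
    ∃ k n : M, s k = s n ∧ k ≠ n ∧ k ∈ STEM z s ∧
      ∀ j ℓ : M, j ≠ ℓ → s j = s ℓ → ({j, ℓ} : Set M) = {k, n} := by
  obtain ⟨a, b, hsab, hab⟩ : ∃ a b, s a = s b ∧ a ≠ b := by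
    refine Function.not_injective_iff.mp fun hinj => ?_
    obtain ⟨y, hy⟩ := Finite.injective_iff_surjective.mp hinj z
    exact hz y hy
  have hcard : Nat.card M ≤ (Set.range s).ncard + 1 := by
    rw [range_eq_compl_singleton_of_induction ind hz, Set.ncard_compl, Set.ncard_singleton]
    omega
  have hpair : ∀ j ℓ, j ≠ ℓ → s j = s ℓ → ({j, ℓ} : Set M) = {a, b} := fun _ _ =>
    Set.pair_eq_of_injOn_compl_singleton
      (Set.injOn_compl_singleton_of_card_le_ncard_range_add_one hcard hab hsab) hab hsab
  have hstem : a ∈ STEM z s ∨ b ∈ STEM z s := by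
    by_contra! hab_stem
    refine hab_stem.1 (forall_mem_STEM_of_induction ind (fun u hu v hsvu => ?_) a)
    by_contra hvu
    have hu_pair : u ∈ ({a, b} : Set M) := hpair v u hvu hsvu ▸ Or.inr rfl
    rcases hu_pair with rfl | rfl
    exacts [hab_stem.1 hu, hab_stem.2 hu]
  rcases hstem with ha | hb
  · exact ⟨a, b, hsab, hab, ha, hpair⟩
  · exact ⟨b, a, hsab.symm, hab.symm, hb, fun j ℓ hjℓ hsjℓ =>
      (hpair j ℓ hjℓ hsjℓ).trans (Set.pair_comm a b)⟩
end
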